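/- arXiv:1212.0137 — 2 statements merged into one kernel-verified Lean document; each statement's English description precedes it below -/
import Mathlib

section
/- For every j ∈ ℕ₀ there exists a polynomial P ∈ ℂ[y] with deg P ≤ j − 1 (P = 0 when j = 0) such that A^a(t)·λ_γ(qt)^j + B^a(t)·λ_γ(t)^j + C^a(t)·λ_γ(t/q)^j = (a·q^{−j−1} + q^{j+1}·a^{−1})·λ_γ(t)^j + P(λ_γ(t)) as an identity of rational functions of t. In particular the operator L^a maps the polynomial algebra ℂ[λ_γ] into itself and, in the basis of powers of λ_γ, acts triangularly with diagonal entries a/q^{j+1} + q^{j+1}/a. -/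
open scoped BigOperators

namespace AW

noncomputable section

/-- q-shifted factorial `(u;q)_n`. -/
def qpoch (q u : ℂ) (n : ℕ) : ℂ := ∏ l ∈ Finset.range n, (1 - u * q ^ l)

/-- `(u;q)_∞`. -/
def qpochInf (q u : ℂ) : ℂ := ∏' l : ℕ, (1 - u * q ^ l)

/-- Askey–Wilson polynomial `p_n(x;a,b,c,d)` as a function of `z`, `x = (z+1/z)/2`. -/
def awP (q a b c d : ℂ) (n : ℕ) (z : ℂ) : ℂ :=
  qpoch q (a * b) n * qpoch q (a * c) n * qpoch q (a * d) n / a ^ n *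
    ∑ l ∈ Finset.range (n + 1),
      qpoch q (q ^ (-(n : ℤ))) l * qpoch q (a * b * c * d * q ^ ((n : ℤ) - 1)) l *
          qpoch q (a * z) l * qpoch q (a / z) l * q ^ l /
        (qpoch q (a * b) l * qpoch q (a * c) l * qpoch q (a * d) l * qpoch q q l)

/-- `λ_n = (q^{-n}-1)(1-abcd q^{n-1})`. -/
def lamn (q a b c d : ℂ) (n : ℤ) : ℂ := (q ^ (-n) - 1) * (1 - a * b * c * d * q ^ (n - 1))

/-- `λ_γ` as a rational function of `t = q^γ`. -/
def lamt (q a b c d t : ℂ) : ℂ := (1 / t - 1) * (1 - a * b * c * d * t / q)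

/-- `ξ^a_n`. -/
def xiA (q a b c d : ℂ) (n : ℕ) : ℂ :=
  q ^ n * qpoch q (a * b * c * d / q) n /
    (a ^ n * (qpoch q (b * c) n * qpoch q (b * d) n * qpoch q (c * d) n * qpoch q q n))

/-- `ξ^{δ}_n`, where `δ : Fin 4` encodes which of `a,b,c,d` is distinguished. -/
def xiD (q a b c d : ℂ) (δ : Fin 4) (n : ℕ) : ℂ :=
  match δ with
  | ⟨0, _⟩ => xiA q a b c d n
  | ⟨1, _⟩ => xiA q b c d a n
  | ⟨2, _⟩ => xiA q c d a b n
  | ⟨3, _⟩ => xiA q d a b c n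

/-- `ξ^a_m p_m(x)` with the convention that it vanishes for negative `m`. -/
def xiP (q a b c d : ℂ) (m : ℤ) (z : ℂ) : ℂ :=
  if 0 ≤ m then xiA q a b c d m.toNat * awP q a b c d m.toNat z else 0

/-- `A^a_γ` as a rational function of `t = q^γ`. -/
def Acoef (q a b c d t : ℂ) : ℂ :=
  a * (1 - b * c * t) * (1 - b * d * t) * (1 - c * d * t) * (1 - q * t) /
    (q * (1 - a * b * c * d * t ^ 2 / q) * (1 - a * b * c * d * t ^ 2))

/-- `C^a_γ` as a rational function of `t = q^γ`. -/
def Ccoef (q a b c d t : ℂ) : ℂ :=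
  q * (1 - a * b * c * d * t / q ^ 2) * (1 - a * b * t / q) * (1 - a * c * t / q) *
      (1 - a * d * t / q) /
    (a * (1 - a * b * c * d * t ^ 2 / q ^ 2) * (1 - a * b * c * d * t ^ 2 / q))

/-- `B^a_γ` as a rational function of `t = q^γ`. -/
def Bcoef (q a b c d t : ℂ) : ℂ := a / q + q / a - Acoef q a b c d t - Ccoef q a b c d t

/-- The operator `L^a` acting on functions of `t = q^γ`. -/
def Lop (q a b c d : ℂ) (r : ℂ → ℂ) : ℂ → ℂ := fun t =>
  Acoef q a b c d t * r (q * t) + Bcoef q a b c d t * r t + Ccoef q a b c d t * r (t / q)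

/-- `L^{δ}` for `δ ∈ {a,b,c,d}`. -/
def LopD (q a b c d : ℂ) (δ : Fin 4) : (ℂ → ℂ) → ℂ → ℂ :=
  match δ with
  | ⟨0, _⟩ => Lop q a b c d
  | ⟨1, _⟩ => Lop q b c d a
  | ⟨2, _⟩ => Lop q c d a b
  | ⟨3, _⟩ => Lop q d a b c

/-- `f(L)` applied to a function `r` of `t = q^γ`. -/
def polyLop (L : (ℂ → ℂ) → ℂ → ℂ) (f : Polynomial ℂ) (r : ℂ → ℂ) : ℂ → ℂ := fun t =>
  ∑ i ∈ Finset.range (f.natDegree + 1), f.coeff i * (L^[i] r) t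

/-- `κ^{b;i,j}_n` as a Laurent polynomial in `t = q^n` (paper indexing `1 ≤ i, j ≤ k`). -/
def kapB (q a b c d : ℂ) (k i j : ℕ) (t : ℂ) : ℂ :=
  t ^ (-((k : ℤ) - 1)) * (b / a) ^ ((j : ℤ) - (i : ℤ)) *
    (qpoch q (a * c * t * q ^ (1 - (k : ℤ))) (k - i) *
      qpoch q (a * d * t * q ^ (1 - (k : ℤ))) (k - i)) *
    (qpoch q (b * c * t * q ^ (1 - (i : ℤ))) (i - 1) *
      qpoch q (b * d * t * q ^ (1 - (i : ℤ))) (i - 1))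

/-- `κ^{δ_j;i,j}_n`; equal to `1` when `δ_j = a`. -/
def kapD (q a b c d : ℂ) (δ : Fin 4) (k i j : ℕ) (t : ℂ) : ℂ :=
  match δ with
  | ⟨0, _⟩ => 1
  | ⟨1, _⟩ => kapB q a b c d k i j t
  | ⟨2, _⟩ => kapB q a c b d k i j t
  | ⟨3, _⟩ => kapB q a d c b k i j t

/-- `τ_n` as a Laurent polynomial in `t = q^n`. -/
def tauF (q a b c d : ℂ) (k : ℕ) (φ : Fin k → Polynomial ℂ) (δ : Fin k → Fin 4) (t : ℂ) : ℂ :=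
  Matrix.det (Matrix.of fun i j : Fin k =>
    kapD q a b c d (δ j) k ((i : ℕ) + 1) ((j : ℕ) + 1) t *
      Polynomial.eval (lamt q a b c d (t * q ^ (-(i : ℤ)))) (φ j))

/-- `p̂_n` as a function of `z`, `x = (z+1/z)/2`. -/
def phat (q a b c d : ℂ) (k : ℕ) (φ : Fin k → Polynomial ℂ) (δ : Fin k → Fin 4)
    (n : ℕ) (z : ℂ) : ℂ :=
  Matrix.det (Matrix.of fun i j : Fin (k + 1) =>
    if hj : (j : ℕ) < k then
      kapD q a b c d (δ ⟨j, hj⟩) k ((i : ℕ) + 1) ((j : ℕ) + 1) (q ^ (n : ℕ)) *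
        Polynomial.eval (lamn q a b c d ((n : ℤ) - (i : ℕ))) (φ ⟨j, hj⟩)
    else xiP q a b c d ((n : ℤ) - (i : ℕ)) z)

/-- the functions `n ↦ ψ^{(j)}_n = φ^{(j)}(λ_n)/ξ^{δ_j}_n` on `ℕ`. -/
def psiF (q a b c d : ℂ) (k : ℕ) (φ : Fin k → Polynomial ℂ) (δ : Fin k → Fin 4)
    (j : Fin k) : ℕ → ℂ := fun n =>
  Polynomial.eval (lamn q a b c d n) (φ j) / xiD q a b c d (δ j) n

/-- a function `ℂ∖{0} → ℂ` given by a Laurent polynomial. -/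
def IsLaurentFun (f : ℂ → ℂ) : Prop :=
  ∃ (p : Polynomial ℂ) (m : ℕ), ∀ t : ℂ, t ≠ 0 → f t = Polynomial.eval t p / t ^ m

/-- half-integer `λ_{n-j/2}` as a Laurent polynomial in `t = q^n`, where `q2 = q^{1/2}`. -/
def lamHalf (abcd q2 : ℂ) (j : ℤ) (t : ℂ) : ℂ :=
  (q2 ^ j / t - 1) * (1 - abcd * q2 ^ (-j - 2) * t)

/-- `ε^{(r)}_n` as a Laurent polynomial in `t = q^n`. -/
def epsF (abcd q2 : ℂ) (r : ℕ) (t : ℂ) : ℂ :=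
  if r % 4 = 0 ∨ r % 4 = 1 then 1
  else lamHalf abcd q2 ((r : ℤ) - 2) t - lamHalf abcd q2 (r : ℤ) t

end

end AW

open AW

/-!
Write `λ = λ_γ(t)`, `λ₊ = λ_γ(qt)` and `λ₋ = λ_γ(t/q)`. Both `λ₊ + λ₋` and `λ₊ λ₋` are
polynomials in `λ`, of degree `1` and monic of degree `2`, so `λ₊^j` and `λ₋^j` obey one
three-term recurrence over `ℂ[λ]`, and `F_j = L^a(λ^j)` satisfies
`F_{j+2} = (λ₊ + λ₋) F_{j+1} - λ₊ λ₋ F_j + λ^j · B^a (λ - λ₊)(λ - λ₋)`.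
The last factor `B^a (λ - λ₊)(λ - λ₋)` is again linear in `λ`: the differences `λ - λ₊` and
`λ - λ₋` carry the factors `1 - abcd t²` and `q² - abcd t²` that cancel poles of `A^a` and `C^a`.
So from `F_0` and `F_1`, every `F_j` is a polynomial in `λ` of degree at most `j`, and its
coefficient of `λ^j` satisfies `μ_{j+2} = (q + q⁻¹) μ_{j+1} - μ_j`, solved by
`μ_j = a q^{-j-1} + q^{j+1} / a`.
-/

section IsPolyOfDegreeLE

open Polynomial Set

variable {R T : Type*} [CommRing R] {S : Set T} {x : T → R} {m n : ℕ} {μ ν : R} {f g : T → R}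

/-- On `S`, `f = P ∘ x` for a polynomial `P` with `natDegree P ≤ n` whose coefficient of `X ^ n`
is `μ`. -/
def IsPolyOfDegreeLE (S : Set T) (x : T → R) (n : ℕ) (μ : R) (f : T → R) : Prop :=
  ∃ P : R[X], P.natDegree ≤ n ∧ P.coeff n = μ ∧ EqOn f (fun t ↦ P.eval (x t)) S

namespace IsPolyOfDegreeLE

theorem congr (hf : IsPolyOfDegreeLE S x n μ f) (hμ : μ = ν) (hfg : EqOn f g S) :
    IsPolyOfDegreeLE S x n ν g := by
  obtain ⟨P, hdeg, hcoeff, hP⟩ := hf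
  exact ⟨P, hdeg, hcoeff.trans hμ, hfg.symm.trans hP⟩

theorem pow (n : ℕ) : IsPolyOfDegreeLE S x n 1 (x ^ n) :=
  ⟨X ^ n, natDegree_X_pow_le n, by simp, fun t _ ↦ by simp⟩

theorem of_const {c : R} (h : ∀ t ∈ S, f t = c) : IsPolyOfDegreeLE S x 0 c f :=
  ⟨C c, (natDegree_C c).le, coeff_C_zero, fun t ht ↦ by simp [h t ht]⟩

theorem of_linear {σ e : R} (h : ∀ t ∈ S, f t = σ * x t + e) : IsPolyOfDegreeLE S x 1 σ f :=
  ⟨C σ * X + C e, natDegree_linear_le, by simp, fun t ht ↦ by simp [h t ht]⟩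

theorem of_quadratic {β γ : R} (h : ∀ t ∈ S, f t = x t ^ 2 + β * x t + γ) :
    IsPolyOfDegreeLE S x 2 1 f :=
  ⟨C 1 * X ^ 2 + C β * X + C γ, natDegree_quadratic_le, by simp, fun t ht ↦ by simp [h t ht]⟩

theorem succ (hf : IsPolyOfDegreeLE S x n μ f) : IsPolyOfDegreeLE S x (n + 1) 0 f := by
  obtain ⟨P, hdeg, -, hP⟩ := hf
  exact ⟨P, hdeg.trans n.le_succ, coeff_eq_zero_of_natDegree_lt (Nat.lt_succ_of_le hdeg), hP⟩

theorem add (hf : IsPolyOfDegreeLE S x n μ f) (hg : IsPolyOfDegreeLE S x n ν g) :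
    IsPolyOfDegreeLE S x n (μ + ν) (f + g) := by
  obtain ⟨P, hPdeg, hPcoeff, hP⟩ := hf
  obtain ⟨Q, hQdeg, hQcoeff, hQ⟩ := hg
  refine ⟨P + Q, natDegree_add_le_of_degree_le hPdeg hQdeg, by rw [coeff_add, hPcoeff, hQcoeff],
    fun t ht ↦ ?_⟩
  simp [hP ht, hQ ht]

theorem sub (hf : IsPolyOfDegreeLE S x n μ f) (hg : IsPolyOfDegreeLE S x n ν g) :
    IsPolyOfDegreeLE S x n (μ - ν) (f - g) := by
  obtain ⟨P, hPdeg, hPcoeff, hP⟩ := hf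
  obtain ⟨Q, hQdeg, hQcoeff, hQ⟩ := hg
  refine ⟨P - Q, (natDegree_sub_le_of_le hPdeg hQdeg).trans (max_self n).le,
    by rw [coeff_sub, hPcoeff, hQcoeff], fun t ht ↦ ?_⟩
  simp [hP ht, hQ ht]

theorem mul (hf : IsPolyOfDegreeLE S x m μ f) (hg : IsPolyOfDegreeLE S x n ν g) :
    IsPolyOfDegreeLE S x (m + n) (μ * ν) (f * g) := by
  obtain ⟨P, hPdeg, hPcoeff, hP⟩ := hf
  obtain ⟨Q, hQdeg, hQcoeff, hQ⟩ := hg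
  refine ⟨P * Q, natDegree_mul_le_of_le hPdeg hQdeg,
    by rw [coeff_mul_add_eq_of_natDegree_le hPdeg hQdeg, hPcoeff, hQcoeff], fun t ht ↦ ?_⟩
  simp [hP ht, hQ ht]

theorem exists_degree_lt (hf : IsPolyOfDegreeLE S x n μ f) :
    ∃ P : R[X], P.degree < n ∧ ∀ t ∈ S, f t = μ * x t ^ n + P.eval (x t) := by
  obtain ⟨P, hdeg, hcoeff, hP⟩ := hf
  refine ⟨P - C μ * X ^ n, (degree_lt_iff_coeff_zero _ _).2 fun k hk ↦ ?_, fun t ht ↦ ?_⟩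
  · rcases hk.eq_or_lt with rfl | hlt
    · simp [hcoeff]
    · simp [coeff_eq_zero_of_natDegree_lt (hdeg.trans_lt hlt), hlt.ne']
  · simp [hP ht]

theorem of_recurrence {σ : R} {s p r : T → R} {F : ℕ → T → R} {c : ℕ → R}
    (hs : IsPolyOfDegreeLE S x 1 σ s) (hp : IsPolyOfDegreeLE S x 2 1 p)
    (hr : IsPolyOfDegreeLE S x 2 0 r) (hc : ∀ n, c (n + 2) = σ * c (n + 1) - c n)
    (h0 : IsPolyOfDegreeLE S x 0 (c 0) (F 0)) (h1 : IsPolyOfDegreeLE S x 1 (c 1) (F 1))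
    (hF : ∀ n, EqOn (F (n + 2)) (s * F (n + 1) - p * F n + x ^ n * r) S) (n : ℕ) :
    IsPolyOfDegreeLE S x n (c n) (F n) := by
  induction n using Nat.twoStepInduction with
  | zero => exact h0
  | one => exact h1
  | more n hn hn1 =>
    have hsF := hs.mul hn1
    have hpF := hp.mul hn
    rw [show 1 + (n + 1) = n + 2 by ring] at hsF
    rw [show 2 + n = n + 2 by ring] at hpF
    exact ((hsF.sub hpF).add ((pow n).mul hr)).congr (by rw [hc]; ring) (hF n).symm

end IsPolyOfDegreeLE

end IsPolyOfDegreeLE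

theorem sub_ne_zero_of_one_sub_div_ne_zero {K : Type*} [Field K] {u v : K} (hv : v ≠ 0)
    (h : 1 - u / v ≠ 0) : v - u ≠ 0 :=
  fun huv ↦ h (by rw [one_sub_div hv, huv, zero_div])

namespace AW

variable {q a b c d t : ℂ}

noncomputable def laEigenvalue (q a : ℂ) (n : ℕ) : ℂ :=
  a * q ^ (-(n : ℤ) - 1) + q ^ ((n : ℤ) + 1) / a

theorem laEigenvalue_eq (n : ℕ) : laEigenvalue q a n = a / q ^ (n + 1) + q ^ (n + 1) / a := by
  rw [laEigenvalue, ← neg_add', ← Nat.cast_succ, zpow_neg, zpow_natCast, ← div_eq_mul_inv]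

theorem laEigenvalue_add_two (hq : q ≠ 0) (n : ℕ) :
    laEigenvalue q a (n + 2) = (q + q⁻¹) * laEigenvalue q a (n + 1) - laEigenvalue q a n := by
  simp only [laEigenvalue_eq]
  field_simp
  ring

def regularSet (q a b c d : ℂ) : Set ℂ :=
  {t | t ≠ 0 ∧ 1 - a * b * c * d * t ^ 2 ≠ 0 ∧ q - a * b * c * d * t ^ 2 ≠ 0 ∧
    q ^ 2 - a * b * c * d * t ^ 2 ≠ 0}

theorem Lop_pow_add_two (f : ℂ → ℂ) (n : ℕ) :
    Lop q a b c d (f · ^ (n + 2)) t =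
      (f (q * t) + f (t / q)) * Lop q a b c d (f · ^ (n + 1)) t
        - f (q * t) * f (t / q) * Lop q a b c d (f · ^ n) t
        + f t ^ n * (Bcoef q a b c d t * ((f t - f (q * t)) * (f t - f (t / q)))) := by
  simp only [Lop]
  ring

theorem Lop_one : Lop q a b c d (fun _ ↦ 1) t = laEigenvalue q a 0 := by
  simp only [Lop, Bcoef, laEigenvalue_eq]
  ring

theorem lamt_mul_add_lamt_div (hq : q ≠ 0) (ht : t ≠ 0) :
    lamt q a b c d (q * t) + lamt q a b c d (t / q) =
      (q + q⁻¹) * lamt q a b c d t + (1 - q) ^ 2 * (q + a * b * c * d) / q ^ 2 := by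
  unfold lamt
  field_simp
  ring

theorem lamt_mul_mul_lamt_div (hq : q ≠ 0) (ht : t ≠ 0) :
    lamt q a b c d (q * t) * lamt q a b c d (t / q) =
      lamt q a b c d t ^ 2 + (q - 1) * (1 - q) * (q + a * b * c * d) / q ^ 2 * lamt q a b c d t
        + (q - 1) * (1 - q) * (1 - a * b * c * d) * (q ^ 2 - a * b * c * d) / q ^ 3 := by
  unfold lamt
  field_simp
  ring

theorem Acoef_eq (hq : q ≠ 0) :
    Acoef q a b c d t = a * (1 - b * c * t) * (1 - b * d * t) * (1 - c * d * t) * (1 - q * t) /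
      ((q - a * b * c * d * t ^ 2) * (1 - a * b * c * d * t ^ 2)) := by
  rw [Acoef, mul_one_sub q, mul_div_cancel₀ _ hq]

theorem Ccoef_eq (hq : q ≠ 0) :
    Ccoef q a b c d t =
      (q ^ 2 - a * b * c * d * t) * (q - a * b * t) * (q - a * c * t) * (q - a * d * t) /
        (a * q * (q ^ 2 - a * b * c * d * t ^ 2) * (q - a * b * c * d * t ^ 2)) := by
  unfold Ccoef
  field_simp

theorem Bcoef_mul_lamt_sub_mul_lamt_sub (hq : q ≠ 0) (ha : a ≠ 0)
    (ht : t ∈ regularSet q a b c d) :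
    Bcoef q a b c d t * ((lamt q a b c d t - lamt q a b c d (q * t)) *
        (lamt q a b c d t - lamt q a b c d (t / q))) =
      -(1 - q) ^ 2 * ((a + b + c + d) * q + (a * b * c + a * b * d + a * c * d + b * c * d)) /
          q ^ 2 * lamt q a b c d t +
        (1 - q) ^ 2 * (a * b * c + a * b * d + a * c * d + b * c * d - (a + b + c + d)) *
          (q ^ 2 - a * b * c * d) / q ^ 3 := by
  obtain ⟨ht, h1, h2, h3⟩ := ht
  rw [Bcoef, Acoef_eq hq, Ccoef_eq hq]
  unfold lamt
  -- `field_simp` only sees the poles as nonzero when they are written in its normal form.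
  generalize hκ : a * b * c * d = κ at *
  rw [mul_comm κ] at h1 h2 h3
  field_simp
  subst hκ
  ring

theorem Lop_lamt (hq : q ≠ 0) (ha : a ≠ 0) (ht : t ∈ regularSet q a b c d) :
    Lop q a b c d (lamt q a b c d) t =
      laEigenvalue q a 1 * lamt q a b c d t +
        (1 - q) * (-q ^ 4 + (b + c + d) * a * q ^ 3 + b * c * d * (1 - q) * a * q ^ 2 +
          a ^ 2 * (1 - q) * q - a ^ 2 * (b * c + b * d + c * d) * q + a ^ 3 * b * c * d) /
          (a * q ^ 3) := by
  obtain ⟨ht, h1, h2, h3⟩ := ht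
  rw [Lop, Bcoef, Acoef_eq hq, Ccoef_eq hq, laEigenvalue_eq]
  unfold lamt
  generalize hκ : a * b * c * d = κ at *
  rw [mul_comm κ] at h1 h2 h3
  field_simp
  subst hκ
  ring

theorem isPolyOfDegreeLE_Lop_lamt_pow (hq : q ≠ 0) (ha : a ≠ 0) (n : ℕ) :
    IsPolyOfDegreeLE (regularSet q a b c d) (lamt q a b c d) n (laEigenvalue q a n)
      (Lop q a b c d (lamt q a b c d · ^ n)) := by
  refine IsPolyOfDegreeLE.of_recurrence
    (F := fun n ↦ Lop q a b c d (lamt q a b c d · ^ n))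
    (s := fun t ↦ lamt q a b c d (q * t) + lamt q a b c d (t / q))
    (p := fun t ↦ lamt q a b c d (q * t) * lamt q a b c d (t / q))
    (r := fun t ↦ Bcoef q a b c d t *
      ((lamt q a b c d t - lamt q a b c d (q * t)) * (lamt q a b c d t - lamt q a b c d (t / q))))
    ?_ ?_ ?_ (laEigenvalue_add_two hq) ?_ ?_ (fun n _ _ ↦ Lop_pow_add_two (lamt q a b c d) n) n
  · exact .of_linear fun t ht ↦ lamt_mul_add_lamt_div hq ht.1
  · exact .of_quadratic fun t ht ↦ lamt_mul_mul_lamt_div hq ht.1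
  · exact (IsPolyOfDegreeLE.of_linear fun t ht ↦ Bcoef_mul_lamt_sub_mul_lamt_sub hq ha ht).succ
  · exact .of_const fun t _ ↦ by simpa only [pow_zero] using Lop_one
  · exact .of_linear fun t ht ↦ by simpa only [pow_one] using Lop_lamt hq ha ht

end AW

theorem La_acts_triangularly_on_powers_of_lambda_general
    (q : ℝ) (hq0 : 0 < q)
    (a b c d : ℂ) (ha : a ≠ 0)
    (j : ℕ) :
    ∃ P : Polynomial ℂ, P.degree < (j : WithBot ℕ) ∧
      ∀ t : ℂ, t ≠ 0 → 1 - a * b * c * d * t ^ 2 ≠ 0 →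
        1 - a * b * c * d * t ^ 2 / (q : ℂ) ≠ 0 →
        1 - a * b * c * d * t ^ 2 / (q : ℂ) ^ 2 ≠ 0 →
        Acoef (q : ℂ) a b c d t * lamt (q : ℂ) a b c d ((q : ℂ) * t) ^ j +
            Bcoef (q : ℂ) a b c d t * lamt (q : ℂ) a b c d t ^ j +
            Ccoef (q : ℂ) a b c d t * lamt (q : ℂ) a b c d (t / (q : ℂ)) ^ j =
          (a * (q : ℂ) ^ (-(j : ℤ) - 1) + (q : ℂ) ^ ((j : ℤ) + 1) / a) *
              lamt (q : ℂ) a b c d t ^ j +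
            Polynomial.eval (lamt (q : ℂ) a b c d t) P := by
  have hq : (q : ℂ) ≠ 0 := Complex.ofReal_ne_zero.mpr hq0.ne'
  obtain ⟨P, hPdeg, hP⟩ :=
    (isPolyOfDegreeLE_Lop_lamt_pow (b := b) (c := c) (d := d) hq ha j).exists_degree_lt
  exact ⟨P, hPdeg, fun t ht h1 h2 h3 ↦ hP t ⟨ht, h1, sub_ne_zero_of_one_sub_div_ne_zero hq h2,
    sub_ne_zero_of_one_sub_div_ne_zero (pow_ne_zero 2 hq) h3⟩⟩

theorem La_acts_triangularly_on_powers_of_lambda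
    (q : ℝ) (hq0 : 0 < q) (hq1 : q < 1)
    (a b c d : ℂ) (ha : a ≠ 0) (hb : b ≠ 0) (hc : c ≠ 0) (hd : d ≠ 0)
    (j : ℕ) :
    ∃ P : Polynomial ℂ, P.degree < (j : WithBot ℕ) ∧
      ∀ t : ℂ, t ≠ 0 → 1 - a * b * c * d * t ^ 2 ≠ 0 →
        1 - a * b * c * d * t ^ 2 / (q : ℂ) ≠ 0 →
        1 - a * b * c * d * t ^ 2 / (q : ℂ) ^ 2 ≠ 0 →
        Acoef (q : ℂ) a b c d t * lamt (q : ℂ) a b c d ((q : ℂ) * t) ^ j +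
            Bcoef (q : ℂ) a b c d t * lamt (q : ℂ) a b c d t ^ j +
            Ccoef (q : ℂ) a b c d t * lamt (q : ℂ) a b c d (t / (q : ℂ)) ^ j =
          (a * (q : ℂ) ^ (-(j : ℤ) - 1) + (q : ℂ) ^ ((j : ℤ) + 1) / a) *
              lamt (q : ℂ) a b c d t ^ j +
            Polynomial.eval (lamt (q : ℂ) a b c d t) P :=
  La_acts_triangularly_on_powers_of_lambda_general q hq0 a b c d ha j
end

section
/- The Laurent polynomial τ_n in t = q^n satisfies I^{(k−1)}(τ_n) = (−1)^{k(k−1)/2}·τ_n; that is, τ_n is invariant under the substitution q^n ↦ 1/(abcd·q^{n−k}) when k ≡ 0, 1 (mod 4) and anti-invariant when k ≡ 2, 3 (mod 4). -/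
open scoped BigOperators

open AW

/-!
The substitution `t ↦ q^k/(abcd t)` reverses the order of the rows of the matrix defining `τ`.
In row `i` the argument `t q^{-i}` of `λ` becomes the image of `t q^{-(k-1-i)}` under the
involution `u ↦ q/(abcd u)`, which fixes `λ`; and reflecting the `q`-shifted factorials,
`(x;q)_m = (-x)^m q^{m(m-1)/2} (q^{1-m}/x;q)_m`, turns `κ^{δ;i,j}` into `κ^{δ;k+1-i,j}`.
The sign is that of the reversal of `k` letters, `(-1)^{k(k-1)/2}`.
-/

theorem Fin.sign_revPerm (n : ℕ) :
    Equiv.Perm.sign (Fin.revPerm : Equiv.Perm (Fin n)) = (-1) ^ (n * (n - 1) / 2) := by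
  induction n with
  | zero => rfl
  | succ n ih =>
    set σ : Equiv.Perm (Fin (n + 1)) :=
      finSuccEquivLast.symm.permCongr (Fin.revPerm : Equiv.Perm (Fin n)).optionCongr
    have hdecomp : (Fin.revPerm : Equiv.Perm (Fin (n + 1))) = (Fin.last n).cycleRange * σ := by
      ext x
      induction x using Fin.lastCases with
      | last => simp [σ, Equiv.permCongr_apply]
      | cast i =>
        simp [σ, Equiv.permCongr_apply]
        omega
    rw [hdecomp, Equiv.Perm.sign_mul, Fin.sign_cycleRange, Equiv.Perm.sign_permCongr,
      Equiv.optionCongr_sign, ih, ← pow_add, Fin.val_last, Nat.triangle_succ, add_comm]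

namespace AW

theorem qpoch_eq_reflect {q x y : ℂ} (hq : q ≠ 0) {m : ℕ} (hxy : x * y * q ^ m = q) :
    qpoch q x m = (-x) ^ m * (∏ l ∈ Finset.range m, q ^ l) * qpoch q y m := by
  have hfactor : (-x) ^ m * ∏ l ∈ Finset.range m, q ^ l = ∏ l ∈ Finset.range m, -x * q ^ l := by
    rw [← Finset.pow_card_mul_prod, Finset.card_range]
  rw [qpoch, qpoch, ← Finset.prod_range_reflect (fun l => 1 - y * q ^ l), hfactor,
    ← Finset.prod_mul_distrib]
  refine Finset.prod_congr rfl fun l hl => ?_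
  obtain ⟨r, rfl⟩ := Nat.exists_eq_add_of_lt (Finset.mem_range.mp hl)
  rw [show l + r + 1 - 1 - l = r by omega]
  have hpow : x * q ^ l * (y * q ^ r) = 1 :=
    mul_right_cancel₀ hq (by linear_combination hxy)
  linear_combination -hpow

theorem qpoch_mul_qpoch_eq_reflect {q x y x' y' : ℂ} (hq : q ≠ 0) {m : ℕ}
    (hx : x * x' * q ^ m = q) (hy : y * y' * q ^ m = q) :
    qpoch q x m * qpoch q y m = (x / y') ^ m * (qpoch q x' m * qpoch q y' m) := by
  have hy' : y' ≠ 0 := by rintro rfl; simp [eq_comm, hq] at hy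
  have hscalar : (-x) ^ m * (-y) ^ m * (∏ l ∈ Finset.range m, q ^ l) ^ 2 = (x / y') ^ m := by
    rw [← mul_pow, neg_mul_neg, Finset.prod_pow_eq_pow_sum, ← pow_mul, Finset.sum_range_id_mul_two]
    rcases m with _ | m
    · simp
    have hdiv : x / y' = x * y * q ^ m := by
      field_simp
      apply mul_right_cancel₀ hq
      linear_combination -x * hy
    rw [hdiv, Nat.add_sub_cancel]
    ring
  rw [qpoch_eq_reflect hq hx, qpoch_eq_reflect hq hy, ← hscalar]
  ring

theorem kapB_reflect {q a b c d t : ℂ} (hq : q ≠ 0) (ha : a ≠ 0) (hb : b ≠ 0) (hc : c ≠ 0)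
    (hd : d ≠ 0) (ht : t ≠ 0) {k i : ℕ} (j : ℕ) (hi : 1 ≤ i) (hik : i ≤ k) :
    kapB q a b c d k i j (q ^ (k : ℤ) / (a * b * c * d * t)) =
      kapB q a b c d k (k + 1 - i) j t := by
  obtain ⟨m2, rfl⟩ := Nat.exists_eq_add_of_le' hi
  obtain ⟨m1, rfl⟩ := Nat.exists_eq_add_of_le' hik
  rw [kapB, kapB, show m1 + (m2 + 1) - (m2 + 1) = m1 by omega, show m2 + 1 - 1 = m2 by omega,
    show m1 + (m2 + 1) + 1 - (m2 + 1) = m1 + 1 by omega,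
    show m1 + (m2 + 1) - (m1 + 1) = m2 by omega, show m1 + 1 - 1 = m1 by omega]
  have hba : b / a ≠ 0 := div_ne_zero hb ha
  have hexp_t : -(((m1 + (m2 + 1) : ℕ) : ℤ) - 1) = -((m1 + m2 : ℕ) : ℤ) := by push_cast; ring
  have hexp_k : 1 - ((m1 + (m2 + 1) : ℕ) : ℤ) = -((m1 + m2 : ℕ) : ℤ) := by push_cast; ring
  have hexp_i : 1 - ((m2 + 1 : ℕ) : ℤ) = -(m2 : ℤ) := by push_cast; ring
  have hexp_i' : 1 - ((m1 + 1 : ℕ) : ℤ) = -(m1 : ℤ) := by push_cast; ring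
  have hexp_ba : (j : ℤ) - ((m2 + 1 : ℕ) : ℤ) = (j : ℤ) - ((m1 + 1 : ℕ) : ℤ) + m1 - m2 := by
    push_cast; ring
  rw [hexp_t, hexp_k, hexp_i, hexp_i', hexp_ba, zpow_sub₀ hba, zpow_add₀ hba]
  simp only [zpow_neg, zpow_natCast]
  set s := q ^ (m1 + (m2 + 1)) / (a * b * c * d * t) with hs
  rw [qpoch_mul_qpoch_eq_reflect hq (x := a * c * s * (q ^ (m1 + m2))⁻¹)
      (y := a * d * s * (q ^ (m1 + m2))⁻¹) (x' := b * d * t * (q ^ m1)⁻¹)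
      (y' := b * c * t * (q ^ m1)⁻¹) (by rw [hs]; field_simp; ring) (by rw [hs]; field_simp; ring),
    qpoch_mul_qpoch_eq_reflect hq (x := b * c * s * (q ^ m2)⁻¹) (y := b * d * s * (q ^ m2)⁻¹)
      (x' := a * d * t * (q ^ (m1 + m2))⁻¹) (y' := a * c * t * (q ^ (m1 + m2))⁻¹)
      (by rw [hs]; field_simp; ring) (by rw [hs]; field_simp; ring)]
  rw [hs]
  simp only [div_pow, mul_pow, inv_pow, ← pow_mul]
  field_simp
  ring

theorem kapD_reflect {q a b c d t : ℂ} (hq : q ≠ 0) (ha : a ≠ 0) (hb : b ≠ 0) (hc : c ≠ 0)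
    (hd : d ≠ 0) (ht : t ≠ 0) (δ : Fin 4) {k i : ℕ} (j : ℕ) (hi : 1 ≤ i) (hik : i ≤ k) :
    kapD q a b c d δ k i j (q ^ (k : ℤ) / (a * b * c * d * t)) =
      kapD q a b c d δ k (k + 1 - i) j t := by
  fin_cases δ
  · rfl
  · exact kapB_reflect hq ha hb hc hd ht j hi hik
  · rw [kapD, kapD, show a * b * c * d * t = a * c * b * d * t by ring]
    exact kapB_reflect hq ha hc hb hd ht j hi hik
  · rw [kapD, kapD, show a * b * c * d * t = a * d * c * b * t by ring]
    exact kapB_reflect hq ha hd hc hb ht j hi hik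

theorem lamt_reflect {q a b c d u : ℂ} (hq : q ≠ 0) (habcd : a * b * c * d ≠ 0) (hu : u ≠ 0) :
    lamt q a b c d (q / (a * b * c * d * u)) = lamt q a b c d u := by
  rw [lamt, lamt]
  generalize a * b * c * d = K at *
  field_simp
  ring

theorem tauF_reflect {q a b c d : ℂ} (hq : q ≠ 0) (ha : a ≠ 0) (hb : b ≠ 0) (hc : c ≠ 0)
    (hd : d ≠ 0) {k : ℕ} (φ : Fin k → Polynomial ℂ) (δ : Fin k → Fin 4) {t : ℂ} (ht : t ≠ 0) :
    tauF q a b c d k φ δ (q ^ (k : ℤ) / (a * b * c * d * t)) =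
      (-1) ^ (k * (k - 1) / 2) * tauF q a b c d k φ δ t := by
  have habcd : a * b * c * d ≠ 0 := by simp [ha, hb, hc, hd]
  have hrows : (Matrix.of fun i j : Fin k =>
      kapD q a b c d (δ j) k (i + 1) (j + 1) (q ^ (k : ℤ) / (a * b * c * d * t)) *
        (φ j).eval (lamt q a b c d (q ^ (k : ℤ) / (a * b * c * d * t) * q ^ (-(i : ℤ))))) =
      (Matrix.of fun i j : Fin k =>
        kapD q a b c d (δ j) k (i + 1) (j + 1) t *
          (φ j).eval (lamt q a b c d (t * q ^ (-(i : ℤ))))).submatrix Fin.revPerm id := by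
    ext i j
    have hi := i.isLt
    have hshift : q ^ (k : ℤ) / (a * b * c * d * t) * q ^ (-(i : ℤ)) =
        q / (a * b * c * d * (t * q ^ (-(Fin.rev i : ℕ) : ℤ))) := by
      rw [Fin.val_rev, show ((k - (i + 1) : ℕ) : ℤ) = k - 1 - i by omega]
      simp only [zpow_neg, zpow_sub₀ hq, zpow_natCast, zpow_one]
      field_simp
    rw [Matrix.submatrix_apply, Matrix.of_apply, Matrix.of_apply, Fin.revPerm_apply, id,
      kapD_reflect hq ha hb hc hd ht _ _ (by omega) (by omega), hshift,
      lamt_reflect hq habcd (mul_ne_zero ht (zpow_ne_zero _ hq)), Fin.val_rev,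
      show k + 1 - (i + 1) = k - (i + 1) + 1 by omega]
  rw [tauF, tauF, hrows, Matrix.det_permute, Fin.sign_revPerm]
  simp

end AW

theorem tau_is_invariant_up_to_sign_general
    (q : ℝ) (hq0 : 0 < q)
    (a b c d : ℂ) (ha : a ≠ 0) (hb : b ≠ 0) (hc : c ≠ 0) (hd : d ≠ 0)
    (k : ℕ)
    (φ : Fin k → Polynomial ℂ)
    (δ : Fin k → Fin 4) :
    ∀ t : ℂ, t ≠ 0 →
      tauF (q : ℂ) a b c d k φ δ ((q : ℂ) ^ (k : ℤ) / (a * b * c * d * t)) =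
        (-1 : ℂ) ^ (k * (k - 1) / 2) * tauF (q : ℂ) a b c d k φ δ t :=
  fun _ ht => tauF_reflect (Complex.ofReal_ne_zero.mpr hq0.ne') ha hb hc hd φ δ ht

theorem tau_is_invariant_up_to_sign
    (q : ℝ) (hq0 : 0 < q) (hq1 : q < 1)
    (a b c d : ℂ) (ha : a ≠ 0) (hb : b ≠ 0) (hc : c ≠ 0) (hd : d ≠ 0)
    (k : ℕ) (hk : 1 ≤ k)
    (φ : Fin k → Polynomial ℂ) (hφ : ∀ j, φ j ≠ 0)
    (δ : Fin k → Fin 4)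
    (hind : LinearIndependent ℂ (psiF (q : ℂ) a b c d k φ δ)) :
    ∀ t : ℂ, t ≠ 0 →
      tauF (q : ℂ) a b c d k φ δ ((q : ℂ) ^ (k : ℤ) / (a * b * c * d * t)) =
        (-1 : ℂ) ^ (k * (k - 1) / 2) * tauF (q : ℂ) a b c d k φ δ t :=
  tau_is_invariant_up_to_sign_general q hq0 a b c d ha hb hc hd k φ δ
end
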